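/- Let g : ℝ → ℝ be the 1-periodic function with g(x) = (15√5/4) · max{1/5 − (x − 1/2)², 0} for x ∈ [0,1], and let g_d(x) = ∏_{i=1}^d g(x_i) for x ∈ 𝕋^d. Then ∫_{𝕋^d} g_d(x) dx = 1, and g_d belongs to S²_{1,∞}B(𝕋^d); concretely, sup_{j∈ℕ₀^d} 2^{2|j|₁} ω₃^{e(j)}(g_d, 2^{−j})₁ < ∞, i.e. the difference Besov norm ‖g_d‖^{(3)}_{S²_{1,∞}B} is finite. -/

import Mathlib

open MeasureTheory Finset ENNReal

noncomputable section

/-- The unit cube `[0,1]^d`, representing the torus `𝕋^d`. -/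
def unitCube (d : ℕ) : Set (Fin d → ℝ) := Set.univ.pi fun _ => Set.Icc (0:ℝ) 1

/-- `f` is 1-periodic in each variable. -/
def IsPeriodic1 {d : ℕ} {α : Type*} (f : (Fin d → ℝ) → α) : Prop :=
  ∀ (x : Fin d → ℝ) (z : Fin d → ℤ), f (fun i => x i + z i) = f x

/-- Univariate `m`-th difference applied in coordinate `i`. -/
def coordDiff {d : ℕ} (m : ℕ) (i : Fin d) (h : ℝ) (f : (Fin d → ℝ) → ℝ) :
    (Fin d → ℝ) → ℝ := fun x =>
  ∑ l ∈ Finset.range (m + 1),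
    (-1 : ℝ) ^ (m - l) * (m.choose l) * f (Function.update x i (x i + l * h))

/-- Mixed `(m,e)`-th difference operator `Δ_h^{m,e}`. -/
def mixedDiff {d : ℕ} (m : ℕ) (e : Finset (Fin d)) (h : Fin d → ℝ)
    (f : (Fin d → ℝ) → ℝ) : (Fin d → ℝ) → ℝ :=
  (e.sort (· ≤ ·)).foldr (fun i g => coordDiff m i (h i) g) f

/-- `L_p(𝕋^d)` norm, computed on a fundamental domain. -/
def torusLp {d : ℕ} (p : ℝ≥0∞) (f : (Fin d → ℝ) → ℝ) : ℝ≥0∞ :=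
  eLpNorm f p (volume.restrict (unitCube d))

/-- Mixed `(m,e)`-th modulus of continuity `ω_m^e(f,t)_p`. -/
def omegaMod {d : ℕ} (m : ℕ) (e : Finset (Fin d)) (p : ℝ≥0∞)
    (f : (Fin d → ℝ) → ℝ) (t : Fin d → ℝ) : ℝ≥0∞ :=
  ⨆ (h : Fin d → ℝ) (_ : ∀ i ∈ e, |h i| < t i), torusLp p (mixedDiff m e h f)

/-- `ℓ_q` norm of a family in `ℝ≥0∞`, with the sup modification for `q = ∞`. -/
def lqNorm {ι : Type*} (q : ℝ≥0∞) (a : ι → ℝ≥0∞) : ℝ≥0∞ :=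
  if q = ∞ then ⨆ i, a i else (∑' i, a i ^ q.toReal) ^ (1 / q.toReal)

/-- The difference Besov norm `‖f‖^{(m)}_{S^r_{p,q}B}` of dominating mixed smoothness. -/
def besovNorm (d m : ℕ) (r : ℝ) (p q : ℝ≥0∞) (f : (Fin d → ℝ) → ℝ) : ℝ≥0∞ :=
  lqNorm q fun j : Fin d → ℕ =>
    ENNReal.ofReal ((2:ℝ) ^ (r * ∑ i, (j i : ℝ))) *
      omegaMod m (Finset.univ.filter fun i => j i ≠ 0) p f
        (fun i => (2:ℝ) ^ (-(j i : ℝ)))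

/-- The 1-periodic kink function `g(x) = (15√5/4) max{1/5 - (x-1/2)², 0}` on `[0,1]`. -/
def kinkFn (x : ℝ) : ℝ :=
  (15 * Real.sqrt 5 / 4) * max (1/5 - (Int.fract x - 1/2) ^ 2) 0

/-- The tensor product kink function `g_d`. -/
def kinkFnTensor (d : ℕ) (x : Fin d → ℝ) : ℝ := ∏ i, kinkFn (x i)

/-! Mixed differences of a tensor product are tensor products of univariate differences, and the
`L_1` norm on the cube factorizes, so everything reduces to the one-dimensional kink `g = kinkFn`.
Writing `g x = (15√5/4) (1/5 - min(dist(x - 1/2, ℤ), r)²)` with `r² = 1/5` shows that `g` is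
`15/2`-Lipschitz, so `|Δ_h³ g| ≤ 30|h|`. Moreover `g` is piecewise quadratic with kinks at
`1/2 ± r + ℤ`, so `Δ_h³ g (t) = 0` unless `t` lies within `3|h|` of one of the four kinks near
`[0,1]`. Hence `‖Δ_h³ g‖_{L_1[0,1]} ≤ 30|h| · 24|h| = 720 h²`, and for `|h| < 2^{-j}` the weighted
factor `4^j ‖Δ_h³ g‖_1` is at most `720`; so every term of the Besov supremum is at most `720^d`. -/

open Function

section ForwardDifference

variable {M G : Type*}

theorem norm_fwdDiff_iter_le [AddCommMonoid M] [SeminormedAddCommGroup G] {u : M → G} {C : ℝ}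
    (hu : ∀ x, ‖u x‖ ≤ C) (h : M) (n : ℕ) (x : M) : ‖(fwdDiff h)^[n] u x‖ ≤ 2 ^ n * C := by
  induction n generalizing x with
  | zero => simpa using hu x
  | succ n ih =>
    rw [iterate_succ_apply', fwdDiff, pow_succ]
    linarith [norm_sub_le ((fwdDiff h)^[n] u (x + h)) ((fwdDiff h)^[n] u x), ih (x + h), ih x]

theorem LipschitzWith.norm_fwdDiff_iter_succ_le [SeminormedAddCommGroup M]
    [SeminormedAddCommGroup G] {K : NNReal} {f : M → G} (hf : LipschitzWith K f) (h : M) (n : ℕ)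
    (x : M) : ‖(fwdDiff h)^[n + 1] f x‖ ≤ 2 ^ n * (K * ‖h‖) := by
  rw [iterate_succ_apply]
  refine norm_fwdDiff_iter_le (fun y => ?_) h n x
  simpa [fwdDiff, ← dist_eq_norm] using hf.dist_le_mul (y + h) y

theorem fwdDiff_iter_congr [AddCommMonoid M] [AddCommGroup G] {f g : M → G} {h y : M} {n : ℕ}
    (hfg : ∀ k ≤ n, f (y + k • h) = g (y + k • h)) : (fwdDiff h)^[n] f y = (fwdDiff h)^[n] g y := by
  simp only [fwdDiff_iter_eq_sum_shift]
  exact Finset.sum_congr rfl fun k hk => by rw [hfg k (Nat.lt_succ_iff.mp (Finset.mem_range.mp hk))]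

theorem Continuous.fwdDiff_iter [TopologicalSpace M] [AddCommMonoid M]
    [ContinuousAdd M] [TopologicalSpace G] [AddCommGroup G] [IsTopologicalAddGroup G]
    {f : M → G} (hf : Continuous f) (h : M) (n : ℕ) : Continuous ((fwdDiff h)^[n] f) := by
  induction n with
  | zero => exact hf
  | succ n ih =>
    rw [iterate_succ']
    exact (ih.comp (continuous_add_const h)).sub ih

end ForwardDifference

theorem fwdDiff_iter_three_eq_zero_of_quadratic {f : ℝ → ℝ} {t h p q r : ℝ}
    (hf : ∀ x, |x - t| ≤ 3 * |h| → f x = p * x ^ 2 + q * x + r) : (fwdDiff h)^[3] f t = 0 := by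
  rw [fwdDiff_iter_congr (g := fun x => p * x ^ 2 + q * x + r) fun k hk => hf _ ?_]
  · simp only [iterate_succ_apply', iterate_zero_apply, fwdDiff]
    ring
  · rw [add_sub_cancel_left, nsmul_eq_mul, abs_mul, Nat.abs_cast]
    gcongr
    exact_mod_cast hk

/-- `kinkFn` is supported on `[1/2 - kinkRadius, 1/2 + kinkRadius] + ℤ`. -/
def kinkRadius : ℝ := √5 / 5

theorem kinkRadius_sq : kinkRadius ^ 2 = 1 / 5 := by
  rw [kinkRadius, div_pow, Real.sq_sqrt (by norm_num)]; norm_num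

theorem sqrt_five_mul_kinkRadius : √5 * kinkRadius = 1 := by
  rw [kinkRadius, ← mul_div_assoc, Real.mul_self_sqrt (by norm_num)]; norm_num

theorem kinkRadius_pos : 0 < kinkRadius := by unfold kinkRadius; positivity

theorem kinkRadius_lt_half : kinkRadius < 1 / 2 := by
  nlinarith [kinkRadius_sq, kinkRadius_pos]

theorem kinkFn_nonneg (x : ℝ) : 0 ≤ kinkFn x := by unfold kinkFn; positivity

theorem kinkFn_add_one (x : ℝ) : kinkFn (x + 1) = kinkFn x := by
  simp only [kinkFn, Int.fract_add_one]

theorem kinkFn_eq_of_mem_Icc {x : ℝ} (hx : x ∈ Set.Icc (1 / 2 - kinkRadius) (1 / 2 + kinkRadius)) :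
    kinkFn x = 15 * √5 / 4 * (1 / 5 - (x - 1 / 2) ^ 2) := by
  have hr := kinkRadius_lt_half
  rw [kinkFn, Int.fract_eq_self.mpr ⟨by linarith [hx.1], by linarith [hx.2]⟩,
    max_eq_left (by nlinarith [hx.1, hx.2, kinkRadius_sq])]

theorem kinkFn_eq_zero_of_mem_Icc_right {x : ℝ}
    (hx : x ∈ Set.Icc (1 / 2 + kinkRadius) (3 / 2 - kinkRadius)) : kinkFn x = 0 := by
  have hr := kinkRadius_sq
  suffices 1 / 5 - (Int.fract x - 1 / 2) ^ 2 ≤ 0 by rw [kinkFn, max_eq_right this, mul_zero]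
  rcases lt_or_ge x 1 with hx1 | hx1
  · rw [Int.fract_eq_self.mpr ⟨by linarith [hx.1, kinkRadius_pos], hx1⟩]
    nlinarith [hx.1, kinkRadius_pos]
  · have hfract : Int.fract x = x - 1 := by
      rw [← Int.fract_sub_one,
        Int.fract_eq_self.mpr ⟨by linarith, by linarith [hx.2, kinkRadius_pos]⟩]
    rw [hfract]
    nlinarith [hx.2, kinkRadius_pos]

theorem kinkFn_eq_zero_of_mem_Icc_left {x : ℝ}
    (hx : x ∈ Set.Icc (kinkRadius - 1 / 2) (1 / 2 - kinkRadius)) : kinkFn x = 0 := by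
  rw [← kinkFn_add_one]
  exact kinkFn_eq_zero_of_mem_Icc_right ⟨by linarith [hx.1], by linarith [hx.2]⟩

theorem abs_fract_sub_half_eq_norm (x : ℝ) :
    |Int.fract x - 1 / 2| = ‖((x - 1 / 2 : ℝ) : UnitAddCircle)‖ := by
  rw [UnitAddCircle.norm_eq, round_eq, sub_add_cancel, Int.fract]
  ring_nf

theorem kinkFn_eq_min (x : ℝ) :
    kinkFn x = 15 * √5 / 4 * (1 / 5 - min ‖((x - 1 / 2 : ℝ) : UnitAddCircle)‖ kinkRadius ^ 2) := by
  rw [kinkFn, ← abs_fract_sub_half_eq_norm]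
  congr 1
  have hr := kinkRadius_sq
  rcases le_total |Int.fract x - 1 / 2| kinkRadius with h | h
  · rw [min_eq_left h, sq_abs, max_eq_left]
    nlinarith [abs_nonneg (Int.fract x - 1 / 2), sq_abs (Int.fract x - 1 / 2)]
  · rw [min_eq_right h, max_eq_right, hr, sub_self]
    nlinarith [abs_nonneg (Int.fract x - 1 / 2), sq_abs (Int.fract x - 1 / 2), kinkRadius_pos]

theorem lipschitzWith_kinkFn : LipschitzWith (15 / 2) kinkFn := by
  refine LipschitzWith.of_dist_le_mul fun x y => ?_
  set m : ℝ → ℝ := fun x => min ‖((x - 1 / 2 : ℝ) : UnitAddCircle)‖ kinkRadius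
  have hm : ∀ x, 0 ≤ m x ∧ m x ≤ kinkRadius := fun x =>
    ⟨le_min (norm_nonneg _) kinkRadius_pos.le, min_le_right _ _⟩
  have hmlip : |m x - m y| ≤ |x - y| := by
    refine (abs_min_sub_min_le_max _ _ _ _).trans ?_
    rw [sub_self, abs_zero, max_eq_left (abs_nonneg _)]
    refine (abs_norm_sub_norm_le _ _).trans ?_
    rw [← AddCircle.coe_sub, sub_sub_sub_cancel_right]
    exact QuotientAddGroup.norm_mk_le_norm
  have hcoef : 15 * √5 / 4 * (2 * kinkRadius) = 15 / 2 := by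
    linear_combination 15 / 2 * sqrt_five_mul_kinkRadius
  have hdiff : kinkFn x - kinkFn y = 15 * √5 / 4 * ((m y - m x) * (m x + m y)) := by
    rw [kinkFn_eq_min, kinkFn_eq_min]; ring
  rw [Real.dist_eq, Real.dist_eq, hdiff, abs_mul, abs_mul, abs_sub_comm (m y),
    abs_of_pos (by positivity : (0:ℝ) < 15 * √5 / 4), abs_of_nonneg (add_nonneg (hm x).1 (hm y).1)]
  calc _ ≤ 15 * √5 / 4 * (|x - y| * (2 * kinkRadius)) := by
        gcongr
        · exact add_nonneg (hm x).1 (hm y).1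
        · linarith [hm x, hm y]
    _ = (15 / 2 : NNReal) * |x - y| := by push_cast; rw [← hcoef]; ring

theorem continuous_kinkFn : Continuous kinkFn := lipschitzWith_kinkFn.continuous

theorem intervalIntegral_kinkFn : ∫ x in (0:ℝ)..1, kinkFn x = 1 := by
  set r := kinkRadius
  have hr := kinkRadius_pos
  have hr' := kinkRadius_lt_half
  have hint : ∀ u v : ℝ, IntervalIntegrable kinkFn volume u v := fun u v =>
    continuous_kinkFn.intervalIntegrable u v
  have hleft : ∫ x in (0:ℝ)..(1 / 2 - r), kinkFn x = 0 := by
    refine (intervalIntegral.integral_congr fun x hx => ?_).trans intervalIntegral.integral_zero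
    rw [Set.uIcc_of_le (by linarith)] at hx
    exact kinkFn_eq_zero_of_mem_Icc_left ⟨by linarith [hx.1], hx.2⟩
  have hright : ∫ x in (1 / 2 + r)..1, kinkFn x = 0 := by
    refine (intervalIntegral.integral_congr fun x hx => ?_).trans intervalIntegral.integral_zero
    rw [Set.uIcc_of_le (by linarith)] at hx
    exact kinkFn_eq_zero_of_mem_Icc_right ⟨hx.1, by linarith [hx.2]⟩
  have hmid : ∫ x in (1 / 2 - r)..(1 / 2 + r), kinkFn x = 1 := by
    rw [intervalIntegral.integral_congr (g := fun x => 15 * √5 / 4 * (1 / 5 - (x - 1 / 2) ^ 2))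
      fun x hx => kinkFn_eq_of_mem_Icc (by rwa [Set.uIcc_of_le (by linarith)] at hx)]
    rw [intervalIntegral.integral_const_mul,
      intervalIntegral.integral_comp_sub_right (fun x => 1 / 5 - x ^ 2)]
    simp only [one_div, sub_sub_cancel_left, add_sub_cancel_left, intervalIntegrable_const,
      intervalIntegral.intervalIntegrable_pow, intervalIntegral.integral_sub,
      intervalIntegral.integral_const, sub_neg_eq_add, smul_eq_mul, integral_pow]
    linear_combination (3 / 2 - 5 / 2 * r ^ 2) * sqrt_five_mul_kinkRadius - 5 / 2 * kinkRadius_sq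
  rw [← intervalIntegral.integral_add_adjacent_intervals (hint 0 (1 / 2 - r)) (hint _ 1),
    ← intervalIntegral.integral_add_adjacent_intervals (hint _ (1 / 2 + r)) (hint _ 1),
    hleft, hmid, hright]
  norm_num

theorem setIntegral_kinkFn : ∫ x in Set.Icc (0:ℝ) 1, kinkFn x = 1 := by
  rw [integral_Icc_eq_integral_Ioc, ← intervalIntegral.integral_of_le zero_le_one,
    intervalIntegral_kinkFn]

theorem eLpNorm_kinkFn : eLpNorm kinkFn 1 (volume.restrict (Set.Icc (0:ℝ) 1)) = 1 := by
  rw [eLpNorm_one_eq_lintegral_enorm,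
    ← ofReal_integral_norm_eq_lintegral_enorm continuous_kinkFn.integrableOn_Icc]
  simp_rw [Real.norm_of_nonneg (kinkFn_nonneg _), setIntegral_kinkFn, ENNReal.ofReal_one]

/-- The kinks of `kinkFn` (the points of `1/2 ± kinkRadius + ℤ`) lying within `1/2` of `[0,1]`. -/
def kinkPoints : Fin 4 → ℝ :=
  ![kinkRadius - 1 / 2, 1 / 2 - kinkRadius, 1 / 2 + kinkRadius, 3 / 2 - kinkRadius]

theorem fwdDiff_iter_three_kinkFn_eq_zero {t h : ℝ} (ht : t ∈ Set.Icc (0:ℝ) 1)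
    (hk : t ∉ ⋃ i, Metric.ball (kinkPoints i) (3 * |h|)) : (fwdDiff h)^[3] kinkFn t = 0 := by
  simp only [Set.mem_iUnion, Metric.mem_ball, Real.dist_eq, not_exists, not_lt,
    Fin.forall_fin_succ, IsEmpty.forall_iff, and_true] at hk
  obtain ⟨h₁, h₂, h₃, h₄⟩ := hk
  simp only [kinkPoints, Matrix.cons_val_zero, Matrix.cons_val_succ] at h₁ h₂ h₃ h₄
  have hr := kinkRadius_lt_half
  have hwin : ∀ {x}, |x - t| ≤ 3 * |h| → t - 3 * |h| ≤ x ∧ x ≤ t + 3 * |h| := fun hx => by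
    constructor <;> linarith [abs_le.mp hx]
  rcases le_abs'.mp h₂ with h₂ | h₂
  · have h₁ := (le_abs'.mp h₁).resolve_left (by linarith [ht.1, abs_nonneg h])
    refine fwdDiff_iter_three_eq_zero_of_quadratic (p := 0) (q := 0) (r := 0) fun x hx => ?_
    rw [kinkFn_eq_zero_of_mem_Icc_left ⟨by linarith [hwin hx], by linarith [hwin hx]⟩]
    ring
  rcases le_abs'.mp h₃ with h₃ | h₃
  · refine fwdDiff_iter_three_eq_zero_of_quadratic (p := -(15 * √5 / 4)) (q := 15 * √5 / 4)
      (r := -(3 * √5 / 16)) fun x hx => ?_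
    rw [kinkFn_eq_of_mem_Icc ⟨by linarith [hwin hx], by linarith [hwin hx]⟩]
    ring
  · have h₄ := (le_abs'.mp h₄).resolve_right (by linarith [ht.2, abs_nonneg h])
    refine fwdDiff_iter_three_eq_zero_of_quadratic (p := 0) (q := 0) (r := 0) fun x hx => ?_
    rw [kinkFn_eq_zero_of_mem_Icc_right ⟨by linarith [hwin hx], by linarith [hwin hx]⟩]
    ring

theorem eLpNorm_one_restrict_le_of_eq_zero_off {α E : Type*} [MeasurableSpace α]
    [NormedAddCommGroup E] {μ : Measure α} {A S : Set α} {f : α → E} {C : ℝ}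
    (hA : MeasurableSet A) (hS : MeasurableSet S) (hC : ∀ x ∈ A, ‖f x‖ ≤ C)
    (hf : ∀ x ∈ A, x ∉ S → f x = 0) :
    eLpNorm f 1 (μ.restrict A) ≤ ENNReal.ofReal C * μ S := by
  rw [eLpNorm_one_eq_lintegral_enorm]
  calc ∫⁻ x in A, ‖f x‖ₑ ∂μ ≤ ∫⁻ x in A, S.indicator (fun _ => ENNReal.ofReal C) x ∂μ := by
        refine setLIntegral_mono' hA fun x hx => ?_
        by_cases hxS : x ∈ S
        · rw [Set.indicator_of_mem hxS, ← ofReal_norm]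
          exact ENNReal.ofReal_le_ofReal (hC x hx)
        · simp [hf x hx hxS]
    _ ≤ ∫⁻ x, S.indicator (fun _ => ENNReal.ofReal C) x ∂μ := setLIntegral_le_lintegral _ _
    _ = ENNReal.ofReal C * μ S := lintegral_indicator_const hS _

theorem eLpNorm_fwdDiff_iter_three_kinkFn_le (h : ℝ) :
    eLpNorm ((fwdDiff h)^[3] kinkFn) 1 (volume.restrict (Set.Icc (0:ℝ) 1)) ≤
      ENNReal.ofReal (720 * h ^ 2) := by
  have hbound : ∀ x, ‖(fwdDiff h)^[3] kinkFn x‖ ≤ 30 * |h| := fun x => by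
    calc _ ≤ 2 ^ 2 * ((15 / 2 : NNReal) * ‖h‖) :=
          lipschitzWith_kinkFn.norm_fwdDiff_iter_succ_le h 2 x
      _ = 30 * |h| := by norm_num [Real.norm_eq_abs]; ring
  have hvol : volume (⋃ i, Metric.ball (kinkPoints i) (3 * |h|)) ≤ ENNReal.ofReal (24 * |h|) :=
    calc _ ≤ ∑ i, volume (Metric.ball (kinkPoints i) (3 * |h|)) := measure_iUnion_fintype_le _ _
      _ = ENNReal.ofReal (24 * |h|) := by
        simp only [Real.volume_ball, Finset.sum_const, Finset.card_univ, Fintype.card_fin,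
          ← ENNReal.ofReal_nsmul]
        congr 1; norm_num; ring
  calc _ ≤ ENNReal.ofReal (30 * |h|) * volume (⋃ i, Metric.ball (kinkPoints i) (3 * |h|)) :=
        eLpNorm_one_restrict_le_of_eq_zero_off measurableSet_Icc
          (MeasurableSet.iUnion fun _ => measurableSet_ball) (fun x _ => hbound x)
          (fun _ ht hk => fwdDiff_iter_three_kinkFn_eq_zero ht hk)
    _ ≤ ENNReal.ofReal (30 * |h|) * ENNReal.ofReal (24 * |h|) := by gcongr
    _ = ENNReal.ofReal (720 * h ^ 2) := by
        rw [← ENNReal.ofReal_mul (by positivity), ← sq_abs h]; ring_nf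

theorem prod_update_apply_update {ι α R : Type*} [Fintype ι] [DecidableEq ι] [CommMonoid R]
    (u : ι → α → R) (i : ι) (v : α → R) (x : ι → α) (s : α) :
    ∏ j, update u i v j (update x i s j) = v s * ∏ j ∈ Finset.univ.erase i, u j (x j) := by
  rw [← Finset.mul_prod_erase _ _ (Finset.mem_univ i), update_self, update_self]
  congr 1
  refine Finset.prod_congr rfl fun j hj => ?_
  rw [update_of_ne (Finset.ne_of_mem_erase hj), update_of_ne (Finset.ne_of_mem_erase hj)]

section Tensor

variable {d : ℕ}

theorem coordDiff_eq_fwdDiff_iter (m : ℕ) (i : Fin d) (h : ℝ) (f : (Fin d → ℝ) → ℝ)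
    (x : Fin d → ℝ) :
    coordDiff m i h f x = (fwdDiff h)^[m] (fun s => f (update x i s)) (x i) := by
  rw [coordDiff, fwdDiff_iter_eq_sum_shift]
  refine Finset.sum_congr rfl fun l _ => ?_
  simp [zsmul_eq_mul, nsmul_eq_mul]

theorem coordDiff_prod (m : ℕ) (i : Fin d) (h : ℝ) (u : Fin d → ℝ → ℝ) :
    coordDiff m i h (fun x => ∏ j, u j (x j)) =
      fun x => ∏ j, update u i ((fwdDiff h)^[m] (u i)) j (x j) := by
  funext x
  have hslice : (fun s => ∏ j, u j (update x i s j)) =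
      (∏ j ∈ Finset.univ.erase i, u j (x j)) • u i := by
    funext s
    rw [Pi.smul_apply, smul_eq_mul, mul_comm, ← prod_update_apply_update, update_eq_self]
  rw [coordDiff_eq_fwdDiff_iter, hslice, fwdDiff_iter_const_smul, Pi.smul_apply, smul_eq_mul,
    mul_comm, ← prod_update_apply_update u i _ x (x i), update_eq_self]

theorem foldr_coordDiff_prod (m : ℕ) (h : Fin d → ℝ) (u : Fin d → ℝ → ℝ) {L : List (Fin d)}
    (hL : L.Nodup) :
    L.foldr (fun i g => coordDiff m i (h i) g) (fun x => ∏ j, u j (x j)) =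
      fun x => ∏ j, (if j ∈ L then (fwdDiff (h j))^[m] (u j) else u j) (x j) := by
  induction L with
  | nil => simp
  | cons i L ih =>
    obtain ⟨hiL, hL⟩ := List.nodup_cons.mp hL
    rw [List.foldr_cons, ih hL, coordDiff_prod, if_neg hiL]
    funext x
    refine Finset.prod_congr rfl fun j _ => ?_
    by_cases hji : j = i
    · subst hji; simp
    · simp [hji]

theorem mixedDiff_prod (m : ℕ) (e : Finset (Fin d)) (h : Fin d → ℝ) (u : Fin d → ℝ → ℝ) :
    mixedDiff m e h (fun x => ∏ j, u j (x j)) =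
      fun x => ∏ j, (if j ∈ e then (fwdDiff (h j))^[m] (u j) else u j) (x j) := by
  simp only [mixedDiff, foldr_coordDiff_prod m h u (e.sort_nodup _), Finset.mem_sort]

theorem volume_restrict_unitCube :
    volume.restrict (unitCube d) = Measure.pi fun _ => volume.restrict (Set.Icc (0:ℝ) 1) := by
  rw [unitCube, volume_pi, Measure.restrict_pi_pi]

theorem setIntegral_unitCube_prod (F : Fin d → ℝ → ℝ) :
    ∫ x in unitCube d, ∏ i, F i (x i) = ∏ i, ∫ t in Set.Icc (0:ℝ) 1, F i t := by
  rw [volume_restrict_unitCube]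
  exact integral_fintype_prod_eq_prod F

theorem torusLp_one_prod (F : Fin d → ℝ → ℝ) (hF : ∀ i, IntegrableOn (F i) (Set.Icc 0 1)) :
    torusLp 1 (fun x => ∏ i, F i (x i)) =
      ∏ i, eLpNorm (F i) 1 (volume.restrict (Set.Icc (0:ℝ) 1)) := by
  have hprod := Integrable.fintype_prod (μ := fun _ => volume.restrict (Set.Icc (0:ℝ) 1)) hF
  rw [torusLp, volume_restrict_unitCube, eLpNorm_one_eq_lintegral_enorm,
    ← ofReal_integral_norm_eq_lintegral_enorm hprod]
  have hfactor : ∀ i, eLpNorm (F i) 1 (volume.restrict (Set.Icc (0:ℝ) 1)) =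
      ENNReal.ofReal (∫ t in Set.Icc (0:ℝ) 1, ‖F i t‖) := fun i => by
    rw [eLpNorm_one_eq_lintegral_enorm, ofReal_integral_norm_eq_lintegral_enorm (hF i)]
  simp_rw [hfactor, _root_.norm_prod]
  rw [integral_fintype_prod_eq_prod (fun i t => ‖F i t‖)]
  exact ENNReal.ofReal_prod_of_nonneg fun i _ => integral_nonneg fun _ => norm_nonneg _

end Tensor

theorem ofReal_four_pow_mul_eLpNorm_fwdDiff_iter_three_kinkFn_le {n : ℕ} {h : ℝ}
    (hh : |h| < 2 ^ (-(n : ℝ))) :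
    ENNReal.ofReal (4 ^ n) *
        eLpNorm ((fwdDiff h)^[3] kinkFn) 1 (volume.restrict (Set.Icc (0:ℝ) 1)) ≤
      ENNReal.ofReal 720 := by
  have hscaled : 2 ^ n * |h| < 1 := by
    rw [Real.rpow_neg zero_le_two, Real.rpow_natCast] at hh
    calc 2 ^ n * |h| < 2 ^ n * (2 ^ n)⁻¹ := by gcongr
      _ = 1 := mul_inv_cancel₀ (by positivity)
  calc _ ≤ ENNReal.ofReal (4 ^ n) * ENNReal.ofReal (720 * h ^ 2) := by
        gcongr; exact eLpNorm_fwdDiff_iter_three_kinkFn_le h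
    _ = ENNReal.ofReal (720 * (2 ^ n * |h|) ^ 2) := by
        rw [← ENNReal.ofReal_mul (by positivity), show (4:ℝ) = 2 ^ 2 by norm_num, ← pow_mul,
          mul_pow, sq_abs]
        ring_nf
    _ ≤ ENNReal.ofReal 720 :=
        ENNReal.ofReal_le_ofReal
          (mul_le_of_le_one_right (by norm_num) (pow_le_one₀ (by positivity) hscaled.le))

theorem rpow_two_mul_sum_eq_prod_four_pow {d : ℕ} (j : Fin d → ℕ) :
    (2:ℝ) ^ ((2:ℝ) * ∑ i, (j i : ℝ)) = ∏ i, (4:ℝ) ^ j i := by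
  rw [Real.rpow_mul zero_le_two, ← Nat.cast_sum, Real.rpow_natCast, Finset.prod_pow_eq_pow_sum]
  norm_num

theorem besovNorm_kinkFnTensor_le (d : ℕ) :
    besovNorm d 3 2 1 ∞ (kinkFnTensor d) ≤ ENNReal.ofReal 720 ^ d := by
  rw [besovNorm, lqNorm, if_pos rfl]
  refine iSup_le fun j => ?_
  simp_rw [omegaMod, ENNReal.mul_iSup]
  refine iSup₂_le fun h hh => ?_
  set e := Finset.univ.filter fun i => j i ≠ 0
  have hcont : ∀ i, Continuous (if i ∈ e then (fwdDiff (h i))^[3] kinkFn else kinkFn) := fun i => by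
    split_ifs
    exacts [continuous_kinkFn.fwdDiff_iter _ _, continuous_kinkFn]
  have htensor : kinkFnTensor d = fun x => ∏ i, (fun _ => kinkFn) i (x i) := rfl
  rw [htensor, mixedDiff_prod,
    torusLp_one_prod _ fun i => (hcont i).integrableOn_Icc, rpow_two_mul_sum_eq_prod_four_pow,
    ENNReal.ofReal_prod_of_nonneg (fun i _ => by positivity), ← Finset.prod_mul_distrib]
  refine (Finset.prod_le_prod' fun i _ => ?_).trans_eq (Fin.prod_const d _)
  split_ifs with hi
  · exact ofReal_four_pow_mul_eLpNorm_fwdDiff_iter_three_kinkFn_le (hh i hi)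
  · have hj : j i = 0 := by simpa [e] using hi
    rw [hj, eLpNorm_kinkFn]
    norm_num

theorem setIntegral_kinkFnTensor (d : ℕ) : ∫ x in unitCube d, kinkFnTensor d x = 1 := by
  simp [kinkFnTensor, setIntegral_unitCube_prod fun _ => kinkFn, setIntegral_kinkFn]

theorem kink_function_integral_and_besov_regularity_general (d : ℕ) :
    (∫ x in unitCube d, kinkFnTensor d x) = 1 ∧
      besovNorm d 3 2 1 ∞ (kinkFnTensor d) < ⊤ :=
  ⟨setIntegral_kinkFnTensor d,
    (besovNorm_kinkFnTensor_le d).trans_lt (ENNReal.pow_lt_top ENNReal.ofReal_lt_top)⟩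

/-- The tensor kink function has integral 1 and belongs to `S²_{1,∞}B(𝕋^d)`:
its difference Besov norm `‖g_d‖^{(3)}_{S²_{1,∞}B}` is finite. -/
theorem kink_function_integral_and_besov_regularity (d : ℕ) (hd : 1 ≤ d) :
    (∫ x in unitCube d, kinkFnTensor d x) = 1 ∧
      besovNorm d 3 2 1 ∞ (kinkFnTensor d) < ⊤ :=
  kink_function_integral_and_besov_regularity_general d
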